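/- arXiv:2308.05621 — 3 statements merged into one kernel-verified Lean document; each statement's English description precedes it below -/
import Mathlib

section
/- Let H be a real inner product space, ν ∈ [0,1], α > 0, T a positive integer. Let f : H → ℝ be convex and differentiable with global minimizer x⋆, and let L : H → ℝ be positive with ‖∇f(x)‖ ≤ α^{ν/(1+ν)}·(L(x))^{1/(ν+1)}·(f(x) − f(x⋆))^{ν/(1+ν)} for all x ∈ H. Let x_1, …, x_T ∈ H with g_t = ∇f(x_t) ≠ 0 for all t, and suppose there is ψ⋆ ∈ ℝ with ∑_{t=1}^T ⟨g_t/‖g_t‖, x_t − x⋆⟩ ≤ ψ⋆. Define x̄_T = (∑_{t=1}^T 1/‖g_t‖)^{-1}·∑_{t=1}^T x_t/‖g_t‖. Then f(x̄_T) − f(x⋆) ≤ α^ν·(ψ⋆/T)^{1+ν}·(∏_{t=1}^T L(x_t))^{1/T} ≤ α^ν·(ψ⋆/T)^{1+ν}·(1/T)∑_{t=1}^T L(x_t). -/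
/-!
By convexity `f (x t) - f x⋆ ≤ ⟪g t, x t - x⋆⟫`, so the regret bound gives
`∑ ε t / ‖g t‖ ≤ ψ` for `ε t = f (x t) - f x⋆`, and Jensen bounds `f x̄ - f x⋆` by
the `1 / ‖g t‖`-weighted mean of the `ε t`. Write `G` for geometric means over `t` and
`R = ψ / T`. AM-GM turns these two facts into `f x̄ - f x⋆ ≤ R * G ‖g‖` and
`G ε ≤ R * G ‖g‖`, while the Hölder hypothesis raised to the power `1 + ν` gives
`G ‖g‖ ^ (1 + ν) ≤ α ^ ν * G L * G ε ^ ν ≤ α ^ ν * G L * R ^ ν * G ‖g‖ ^ ν`.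
Cancelling `G ‖g‖ ^ ν` leaves `G ‖g‖ ≤ α ^ ν * R ^ ν * G L`, hence the bound; one more
AM-GM compares `G L` with the arithmetic mean.
-/

open scoped RealInnerProductSpace
open Finset

theorem ConvexOn.sub_le_inner_of_hasFDerivAt {H : Type*} [NormedAddCommGroup H]
    [InnerProductSpace ℝ H] {f : H → ℝ} (hf : ConvexOn ℝ Set.univ f) {g a : H}
    (hd : HasFDerivAt f (innerSL ℝ g) a) (b : H) :
    f a - f b ≤ ⟪g, a - b⟫ := by
  have hline : HasDerivAt (f ∘ AffineMap.lineMap (k := ℝ) a b) ⟪g, b - a⟫ 0 := by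
    have hd' : HasFDerivAt f (innerSL ℝ g) (AffineMap.lineMap a b (0 : ℝ)) := by
      rwa [AffineMap.lineMap_apply_zero]
    simpa using hd'.comp_hasDerivAt (0 : ℝ) AffineMap.hasDerivAt_lineMap
  have hslope := (hf.comp_affineMap (AffineMap.lineMap a b)).le_slope_of_hasDerivAt
    (Set.mem_univ 0) (Set.mem_univ 1) zero_lt_one hline
  simp [slope_def_field] at hslope
  rw [← neg_sub b a, inner_neg_right]
  linarith

namespace Finset

variable {ι : Type*} (s : Finset ι) {a b : ι → ℝ}

noncomputable def geomMean (a : ι → ℝ) : ℝ := (∏ i ∈ s, a i) ^ (#s : ℝ)⁻¹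

theorem geomMean_nonneg (ha : ∀ i ∈ s, 0 ≤ a i) : 0 ≤ s.geomMean a :=
  Real.rpow_nonneg (prod_nonneg ha) _

theorem geomMean_pos (ha : ∀ i ∈ s, 0 < a i) : 0 < s.geomMean a :=
  Real.rpow_pos_of_pos (prod_pos ha) _

theorem geomMean_mul (ha : ∀ i ∈ s, 0 ≤ a i) (hb : ∀ i ∈ s, 0 ≤ b i) :
    s.geomMean (fun i => a i * b i) = s.geomMean a * s.geomMean b := by
  rw [geomMean, prod_mul_distrib, Real.mul_rpow (prod_nonneg ha) (prod_nonneg hb)]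
  rfl

theorem geomMean_rpow (ha : ∀ i ∈ s, 0 ≤ a i) (r : ℝ) :
    s.geomMean (fun i => a i ^ r) = s.geomMean a ^ r := by
  rw [geomMean, geomMean, Real.finsetProd_rpow s a ha, ← Real.rpow_mul (prod_nonneg ha),
    ← Real.rpow_mul (prod_nonneg ha), mul_comm]

theorem geomMean_inv (ha : ∀ i ∈ s, 0 ≤ a i) :
    s.geomMean (fun i => (a i)⁻¹) = (s.geomMean a)⁻¹ := by
  rw [geomMean, geomMean, prod_inv_distrib, Real.inv_rpow (prod_nonneg ha)]

theorem geomMean_const (hs : s.Nonempty) {c : ℝ} (hc : 0 ≤ c) :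
    s.geomMean (fun _ => c) = c := by
  rw [geomMean, prod_const, Real.pow_rpow_inv_natCast hc hs.card_ne_zero]

theorem geomMean_le_geomMean (ha : ∀ i ∈ s, 0 ≤ a i) (hab : ∀ i ∈ s, a i ≤ b i) :
    s.geomMean a ≤ s.geomMean b :=
  Real.rpow_le_rpow (prod_nonneg ha) (prod_le_prod ha hab) (by positivity)

theorem geomMean_le_arithMean (hs : s.Nonempty) (ha : ∀ i ∈ s, 0 ≤ a i) :
    s.geomMean a ≤ (∑ i ∈ s, a i) / #s := by
  simpa [geomMean] using
    Real.geom_mean_le_arith_mean s (fun _ => 1) a (fun _ _ => zero_le_one) (by simpa using hs) ha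

end Finset

theorem rpow_one_add_le_of_le_holder {ν α L e g : ℝ} (hν : 0 ≤ ν) (hα : 0 ≤ α)
    (hL : 0 ≤ L) (he : 0 ≤ e) (hg : 0 ≤ g)
    (h : g ≤ α ^ (ν / (1 + ν)) * L ^ (1 / (1 + ν)) * e ^ (ν / (1 + ν))) :
    g ^ (1 + ν) ≤ α ^ ν * L * e ^ ν := by
  have hν' : 1 + ν ≠ 0 := by positivity
  calc g ^ (1 + ν)
      ≤ (α ^ (ν / (1 + ν)) * L ^ (1 / (1 + ν)) * e ^ (ν / (1 + ν))) ^ (1 + ν) :=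
        Real.rpow_le_rpow hg h (by positivity)
    _ = α ^ ν * L * e ^ ν := by
        rw [Real.mul_rpow (by positivity) (by positivity), Real.mul_rpow (by positivity)
          (by positivity), ← Real.rpow_mul hα, ← Real.rpow_mul hL, ← Real.rpow_mul he,
          div_mul_cancel₀ _ hν', div_mul_cancel₀ _ hν', Real.rpow_one]

section NormalizedRegret

variable {ι : Type*} {s : Finset ι} {g ε L : ι → ℝ} {ν c : ℝ}

theorem Finset.centerMass_inv_le_mul_geomMean (hs : s.Nonempty) (hg : ∀ i ∈ s, 0 < g i)
    (hε : ∀ i ∈ s, 0 ≤ ε i) :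
    s.centerMass (fun i => (g i)⁻¹) ε
      ≤ (∑ i ∈ s, (g i)⁻¹ * ε i) / #s * s.geomMean g := by
  have hG := s.geomMean_pos hg
  have hn : (0 : ℝ) < #s := by exact_mod_cast hs.card_pos
  have hW : #s / s.geomMean g ≤ ∑ i ∈ s, (g i)⁻¹ := by
    have hamgm := s.geomMean_le_arithMean hs (a := fun i => (g i)⁻¹)
      fun i hi => (inv_pos.2 (hg i hi)).le
    rw [s.geomMean_inv fun i hi => (hg i hi).le, le_div_iff₀ hn] at hamgm
    rwa [div_eq_mul_inv, mul_comm]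
  have hsum : 0 ≤ ∑ i ∈ s, (g i)⁻¹ * ε i :=
    sum_nonneg fun i hi => mul_nonneg (inv_nonneg.2 (hg i hi).le) (hε i hi)
  calc s.centerMass (fun i => (g i)⁻¹) ε
        = (∑ i ∈ s, (g i)⁻¹ * ε i) / ∑ i ∈ s, (g i)⁻¹ := by
          simp [centerMass, div_eq_inv_mul]
    _ ≤ (∑ i ∈ s, (g i)⁻¹ * ε i) / (#s / s.geomMean g) :=
        div_le_div_of_nonneg_left hsum (by positivity) hW
    _ = (∑ i ∈ s, (g i)⁻¹ * ε i) / #s * s.geomMean g := by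
        rw [div_div_eq_mul_div, mul_div_right_comm]

theorem Finset.geomMean_le_mul_geomMean (hs : s.Nonempty) (hg : ∀ i ∈ s, 0 < g i)
    (hε : ∀ i ∈ s, 0 ≤ ε i) :
    s.geomMean ε ≤ (∑ i ∈ s, (g i)⁻¹ * ε i) / #s * s.geomMean g := by
  have hG := s.geomMean_pos hg
  have hamgm := s.geomMean_le_arithMean hs (a := fun i => (g i)⁻¹ * ε i)
    fun i hi => mul_nonneg (inv_nonneg.2 (hg i hi).le) (hε i hi)
  rwa [s.geomMean_mul (fun i hi => inv_nonneg.2 (hg i hi).le) hε,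
    s.geomMean_inv fun i hi => (hg i hi).le, inv_mul_le_iff₀ hG, mul_comm] at hamgm

theorem Finset.geomMean_le_of_rpow_le (hs : s.Nonempty) (hν : 0 ≤ ν) (hc : 0 ≤ c)
    (hg : ∀ i ∈ s, 0 < g i) (hε : ∀ i ∈ s, 0 ≤ ε i) (hL : ∀ i ∈ s, 0 ≤ L i)
    (hholder : ∀ i ∈ s, g i ^ (1 + ν) ≤ c * L i * ε i ^ ν) {R : ℝ} (hR : 0 ≤ R)
    (hεg : s.geomMean ε ≤ R * s.geomMean g) :
    s.geomMean g ≤ c * s.geomMean L * R ^ ν := by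
  have hG := s.geomMean_pos hg
  have hmean : s.geomMean g ^ (1 + ν) ≤ c * s.geomMean L * s.geomMean ε ^ ν := by
    have hcL : ∀ i ∈ s, 0 ≤ c * L i := fun i hi => mul_nonneg hc (hL i hi)
    rw [← s.geomMean_rpow (fun i hi => (hg i hi).le), ← s.geomMean_const hs hc,
      ← s.geomMean_mul (fun _ _ => hc) hL, ← s.geomMean_rpow hε,
      ← s.geomMean_mul hcL fun i hi => Real.rpow_nonneg (hε i hi) ν]
    exact s.geomMean_le_geomMean (fun i hi => by have := hg i hi; positivity) hholder
  have hεν : s.geomMean ε ^ ν ≤ (R * s.geomMean g) ^ ν :=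
    Real.rpow_le_rpow (s.geomMean_nonneg hε) hεg hν
  rw [Real.mul_rpow hR hG.le] at hεν
  refine le_of_mul_le_mul_right ?_ (Real.rpow_pos_of_pos hG ν)
  calc s.geomMean g * s.geomMean g ^ ν = s.geomMean g ^ (1 + ν) := by
        rw [Real.rpow_add hG, Real.rpow_one]
    _ ≤ c * s.geomMean L * (R ^ ν * s.geomMean g ^ ν) :=
        hmean.trans (mul_le_mul_of_nonneg_left hεν
          (mul_nonneg hc (s.geomMean_nonneg hL)))
    _ = c * s.geomMean L * R ^ ν * s.geomMean g ^ ν := by ring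

theorem Finset.le_of_normalized_regret (hs : s.Nonempty) (hν : 0 ≤ ν) (hc : 0 ≤ c)
    (hg : ∀ i ∈ s, 0 < g i) (hε : ∀ i ∈ s, 0 ≤ ε i) (hL : ∀ i ∈ s, 0 ≤ L i)
    (hholder : ∀ i ∈ s, g i ^ (1 + ν) ≤ c * L i * ε i ^ ν) {ψ D : ℝ}
    (hregret : ∑ i ∈ s, (g i)⁻¹ * ε i ≤ ψ)
    (hD : D ≤ s.centerMass (fun i => (g i)⁻¹) ε) :
    D ≤ c * (ψ / #s) ^ (1 + ν) * s.geomMean L := by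
  have hn : (0 : ℝ) < #s := by exact_mod_cast hs.card_pos
  have hG := s.geomMean_pos hg
  have hsum : 0 ≤ ∑ i ∈ s, (g i)⁻¹ * ε i :=
    sum_nonneg fun i hi => mul_nonneg (inv_nonneg.2 (hg i hi).le) (hε i hi)
  have hR : (∑ i ∈ s, (g i)⁻¹ * ε i) / #s * s.geomMean g ≤ ψ / #s * s.geomMean g := by
    gcongr
  have hψ : 0 ≤ ψ / #s := div_nonneg (hsum.trans hregret) hn.le
  have hgeom := s.geomMean_le_of_rpow_le hs hν hc hg hε hL hholder hψ
    ((s.geomMean_le_mul_geomMean hs hg hε).trans hR)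
  calc D ≤ ψ / #s * s.geomMean g :=
        hD.trans ((s.centerMass_inv_le_mul_geomMean hs hg hε).trans hR)
    _ ≤ ψ / #s * (c * s.geomMean L * (ψ / #s) ^ ν) := mul_le_mul_of_nonneg_left hgeom hψ
    _ = c * (ψ / #s) ^ (1 + ν) * s.geomMean L := by
        rw [Real.rpow_add' hψ (by positivity), Real.rpow_one]; ring

end NormalizedRegret

theorem normalized_gradients_local_holder_general
    {H : Type*} [NormedAddCommGroup H] [InnerProductSpace ℝ H]
    (ν α : ℝ) (hν0 : 0 ≤ ν) (hα : 0 < α)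
    (T : ℕ) (hT : 0 < T)
    (f : H → ℝ) (f' : H → H)
    (hconv : ConvexOn ℝ Set.univ f)
    (hdiff : ∀ x, HasFDerivAt f (innerSL ℝ (f' x)) x)
    (xstar : H) (hmin : ∀ x, f xstar ≤ f x)
    (L : H → ℝ) (hLpos : ∀ x, 0 < L x)
    (hgradbound : ∀ x : H, ‖f' x‖
      ≤ α ^ (ν / (1 + ν)) * (L x) ^ (1 / (ν + 1)) * (f x - f xstar) ^ (ν / (1 + ν)))
    (x : ℕ → H)
    (hgne : ∀ t ∈ Finset.Icc 1 T, f' (x t) ≠ 0)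
    (ψ : ℝ)
    (hregret : ∑ t ∈ Finset.Icc 1 T, ⟪‖f' (x t)‖⁻¹ • f' (x t), x t - xstar⟫ ≤ ψ) :
    f ((∑ t ∈ Finset.Icc 1 T, ‖f' (x t)‖⁻¹)⁻¹ •
        ∑ t ∈ Finset.Icc 1 T, ‖f' (x t)‖⁻¹ • x t) - f xstar
      ≤ α ^ ν * (ψ / T) ^ (1 + ν) * (∏ t ∈ Finset.Icc 1 T, L (x t)) ^ (1 / (T : ℝ))
    ∧ α ^ ν * (ψ / T) ^ (1 + ν) * (∏ t ∈ Finset.Icc 1 T, L (x t)) ^ (1 / (T : ℝ))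
      ≤ α ^ ν * (ψ / T) ^ (1 + ν) * ((T : ℝ)⁻¹ * ∑ t ∈ Finset.Icc 1 T, L (x t)) := by
  set s := Icc 1 T
  have hs : s.Nonempty := nonempty_Icc.2 hT
  have hgeom : (∏ t ∈ s, L (x t)) ^ (1 / (T : ℝ)) = s.geomMean fun t => L (x t) := by
    simp [geomMean, s]
  have hg : ∀ t ∈ s, 0 < ‖f' (x t)‖ := fun t ht => norm_pos_iff.2 (hgne t ht)
  have hε : ∀ t ∈ s, 0 ≤ f (x t) - f xstar := fun t _ => sub_nonneg.2 (hmin _)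
  have hL : ∀ t ∈ s, 0 ≤ L (x t) := fun t _ => (hLpos _).le
  have hholder :
      ∀ t ∈ s, ‖f' (x t)‖ ^ (1 + ν) ≤ α ^ ν * L (x t) * (f (x t) - f xstar) ^ ν :=
    fun t ht => rpow_one_add_le_of_le_holder hν0 hα.le (hL t ht) (hε t ht) (norm_nonneg _)
      (add_comm ν 1 ▸ hgradbound (x t))
  have hregret' : ∑ t ∈ s, ‖f' (x t)‖⁻¹ * (f (x t) - f xstar) ≤ ψ := by
    refine (sum_le_sum fun t _ => ?_).trans hregret
    rw [real_inner_smul_left]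
    exact mul_le_mul_of_nonneg_left (hconv.sub_le_inner_of_hasFDerivAt (hdiff _) xstar)
      (inv_nonneg.2 (norm_nonneg _))
  have hjensen := (hconv.add_const (-f xstar)).map_centerMass_le
    (fun t _ => inv_nonneg.2 (norm_nonneg (f' (x t))))
    (sum_pos (fun t ht => inv_pos.2 (hg t ht)) hs) (fun t _ => Set.mem_univ (x t))
  simp only [Function.comp_def, Pi.add_apply, ← sub_eq_add_neg] at hjensen
  have hcard : (#s : ℝ) = T := by simp [s]
  have hbound :=
    s.le_of_normalized_regret hs hν0 (by positivity) hg hε hL hholder hregret' hjensen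
  rw [hcard] at hbound
  rw [hgeom]
  have hψ : 0 ≤ ψ :=
    (sum_nonneg fun t ht => mul_nonneg (inv_nonneg.2 (hg t ht).le) (hε t ht)).trans hregret'
  refine ⟨hbound, mul_le_mul_of_nonneg_left ?_ (by positivity)⟩
  simpa [hcard, div_eq_inv_mul] using s.geomMean_le_arithMean hs hL

/-- Main theorem: optimization with normalized gradients fed to an online linear optimization
algorithm with regret bound `ψ⋆` adapts to the local Hölder smoothness `L(·)`, with a bound
depending on the geometric mean of `L(x_t)`, itself bounded by the arithmetic mean. -/
theorem normalized_gradients_local_holder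
    {H : Type*} [NormedAddCommGroup H] [InnerProductSpace ℝ H]
    (ν α : ℝ) (hν0 : 0 ≤ ν) (hν1 : ν ≤ 1) (hα : 0 < α)
    (T : ℕ) (hT : 0 < T)
    (f : H → ℝ) (f' : H → H)
    (hconv : ConvexOn ℝ Set.univ f)
    (hdiff : ∀ x, HasFDerivAt f (innerSL ℝ (f' x)) x)
    (xstar : H) (hmin : ∀ x, f xstar ≤ f x)
    (L : H → ℝ) (hLpos : ∀ x, 0 < L x)
    (hgradbound : ∀ x : H, ‖f' x‖
      ≤ α ^ (ν / (1 + ν)) * (L x) ^ (1 / (ν + 1)) * (f x - f xstar) ^ (ν / (1 + ν)))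
    (x : ℕ → H)
    (hgne : ∀ t ∈ Finset.Icc 1 T, f' (x t) ≠ 0)
    (ψ : ℝ)
    (hregret : ∑ t ∈ Finset.Icc 1 T, ⟪‖f' (x t)‖⁻¹ • f' (x t), x t - xstar⟫ ≤ ψ) :
    f ((∑ t ∈ Finset.Icc 1 T, ‖f' (x t)‖⁻¹)⁻¹ •
        ∑ t ∈ Finset.Icc 1 T, ‖f' (x t)‖⁻¹ • x t) - f xstar
      ≤ α ^ ν * (ψ / T) ^ (1 + ν) * (∏ t ∈ Finset.Icc 1 T, L (x t)) ^ (1 / (T : ℝ))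
    ∧ α ^ ν * (ψ / T) ^ (1 + ν) * (∏ t ∈ Finset.Icc 1 T, L (x t)) ^ (1 / (T : ℝ))
      ≤ α ^ ν * (ψ / T) ^ (1 + ν) * ((T : ℝ)⁻¹ * ∑ t ∈ Finset.Icc 1 T, L (x t)) :=
  normalized_gradients_local_holder_general ν α hν0 hα T hT f f' hconv hdiff xstar hmin L hLpos
    hgradbound x hgne ψ hregret
end

section
/- Let H be a real inner product space, f : H → ℝ convex and differentiable, T a positive integer, α > 0, x₁ ∈ H. Define iterates by x_{t+1} = x_t − (α/√T)·(g_t/‖g_t‖) where g_t = ∇f(x_t), assuming g_t ≠ 0 for t = 1, …, T. Then for every u ∈ H, ∑_{t=1}^T (f(x_t) − f(u))/‖g_t‖ ≤ √T·‖u − x₁‖²/(2α) + α·√T/2 − (√T/(2α))·‖x_{T+1} − u‖². -/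
open scoped RealInnerProductSpace

/-!
By convexity, `(f x_t - f u) / ‖g_t‖ ≤ ⟪v_t, x_t - u⟫` with `v_t = g_t / ‖g_t‖`. Expanding
`‖x_{t+1} - u‖² = ‖x_t - u‖² - 2η⟪v_t, x_t - u⟫ + η²` for the unit step `v_t` expresses each
`⟪v_t, x_t - u⟫` as a difference of squared distances plus `η/2`; summing telescopes, and
`η = α/√T` gives the stated constants.
-/

open Finset

theorem ConvexOn.add_fderiv_sub_le {E : Type*} [NormedAddCommGroup E] [NormedSpace ℝ E]
    {s : Set E} {f : E → ℝ} {f' : E →L[ℝ] ℝ} {a b : E}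
    (hf : ConvexOn ℝ s f) (ha : a ∈ s) (hb : b ∈ s) (hd : HasFDerivAt f f' a) :
    f a + f' (b - a) ≤ f b := by
  set ℓ : ℝ →ᵃ[ℝ] E := AffineMap.lineMap a b
  have hφ : ConvexOn ℝ (ℓ ⁻¹' s) (f ∘ ℓ) := hf.comp_affineMap ℓ
  have hderiv : HasDerivAt (f ∘ ℓ) (f' (b - a)) 0 := by
    refine HasFDerivAt.comp_hasDerivAt 0 ?_ AffineMap.hasDerivAt_lineMap
    simpa [ℓ] using hd
  have hslope :=
    hφ.le_slope_of_hasDerivAt (by simpa [ℓ] using ha) (by simpa [ℓ] using hb) one_pos hderiv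
  simp only [ℓ, slope_def_field, Function.comp_apply, AffineMap.lineMap_apply_zero,
    AffineMap.lineMap_apply_one, sub_zero, div_one] at hslope
  linarith

theorem ConvexOn.sub_div_norm_le_inner {H : Type*} [NormedAddCommGroup H] [InnerProductSpace ℝ H]
    {s : Set H} {f : H → ℝ} {g a b : H}
    (hf : ConvexOn ℝ s f) (ha : a ∈ s) (hb : b ∈ s) (hd : HasFDerivAt f (innerSL ℝ g) a) :
    (f a - f b) / ‖g‖ ≤ ⟪‖g‖⁻¹ • g, a - b⟫ := by
  have htangent : f a - f b ≤ ⟪g, a - b⟫ := by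
    have := hf.add_fderiv_sub_le ha hb hd
    rw [innerSL_apply_apply, ← neg_sub a b, inner_neg_right] at this
    linarith
  rw [real_inner_smul_left, div_eq_inv_mul]
  exact mul_le_mul_of_nonneg_left htangent (by positivity)

section OnlineGradientDescent

variable {H : Type*} [NormedAddCommGroup H] [InnerProductSpace ℝ H]

theorem inner_sub_eq_of_unit_step {v : H} (hv : ‖v‖ = 1) {η : ℝ} (hη : η ≠ 0) (x u : H) :
    ⟪v, x - u⟫ = (‖x - u‖ ^ 2 - ‖x - η • v - u‖ ^ 2) / (2 * η) + η / 2 := by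
  have hexpand : ‖x - η • v - u‖ ^ 2 = ‖x - u‖ ^ 2 - 2 * η * ⟪v, x - u⟫ + η ^ 2 := by
    rw [sub_right_comm, norm_sub_sq_real, inner_smul_right, norm_smul, hv, real_inner_comm,
      Real.norm_eq_abs, mul_one, sq_abs]
    ring
  rw [hexpand]
  field_simp
  ring

theorem sum_inner_eq_of_unit_steps {x v : ℕ → H} {η : ℝ} (hη : η ≠ 0) {T : ℕ} (hT : 0 < T)
    (hv : ∀ t ∈ Icc 1 T, ‖v t‖ = 1) (hx : ∀ t ∈ Icc 1 T, x (t + 1) = x t - η • v t) (u : H) :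
    ∑ t ∈ Icc 1 T, ⟪v t, x t - u⟫
      = (‖x 1 - u‖ ^ 2 - ‖x (T + 1) - u‖ ^ 2) / (2 * η) + T * η / 2 := by
  calc ∑ t ∈ Icc 1 T, ⟪v t, x t - u⟫
      = ∑ t ∈ Icc 1 T, (-(‖x (t + 1) - u‖ ^ 2 - ‖x t - u‖ ^ 2) / (2 * η) + η / 2) :=
        sum_congr rfl fun t ht ↦ by
          rw [hx t ht, inner_sub_eq_of_unit_step (hv t ht) hη]
          ring
    _ = _ := by
        rw [sum_add_distrib, ← sum_div, sum_neg_distrib, sum_Icc_sub hT fun t ↦ ‖x t - u‖ ^ 2,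
          sum_const, Nat.card_Icc, nsmul_eq_mul, Nat.add_sub_cancel]
        ring

end OnlineGradientDescent

/-- Normalized gradient descent with constant stepsize `α/√T`: weighted regret bound
`∑ (f(x_t) − f(u))/‖g_t‖ ≤ √T‖u − x₁‖²/(2α) + α√T/2 − (√T/(2α))‖x_{T+1} − u‖²`. -/
theorem normalized_gd_weighted_regret
    {H : Type*} [NormedAddCommGroup H] [InnerProductSpace ℝ H]
    (f : H → ℝ) (f' : H → H)
    (hconv : ConvexOn ℝ Set.univ f)
    (hdiff : ∀ x, HasFDerivAt f (innerSL ℝ (f' x)) x)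
    (T : ℕ) (hT : 0 < T) (α : ℝ) (hα : 0 < α) (x₁ : H)
    (x : ℕ → H) (hx1 : x 1 = x₁)
    (hgne : ∀ t ∈ Finset.Icc 1 T, f' (x t) ≠ 0)
    (hrec : ∀ t ∈ Finset.Icc 1 T,
      x (t + 1) = x t - (α / Real.sqrt T) • (‖f' (x t)‖⁻¹ • f' (x t))) :
    ∀ u : H, ∑ t ∈ Finset.Icc 1 T, (f (x t) - f u) / ‖f' (x t)‖
      ≤ Real.sqrt T * ‖u - x₁‖ ^ 2 / (2 * α) + α * Real.sqrt T / 2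
        - Real.sqrt T / (2 * α) * ‖x (T + 1) - u‖ ^ 2 := by
  intro u
  have hsqrt : 0 < Real.sqrt T := Real.sqrt_pos.mpr (by exact_mod_cast hT)
  have hunit : ∀ t ∈ Icc 1 T, ‖‖f' (x t)‖⁻¹ • f' (x t)‖ = 1 := fun t ht ↦ by
    rw [norm_smul, norm_inv, norm_norm, inv_mul_cancel₀ (norm_ne_zero_iff.mpr (hgne t ht))]
  calc ∑ t ∈ Icc 1 T, (f (x t) - f u) / ‖f' (x t)‖
      ≤ ∑ t ∈ Icc 1 T, ⟪‖f' (x t)‖⁻¹ • f' (x t), x t - u⟫ :=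
        sum_le_sum fun t _ ↦
          hconv.sub_div_norm_le_inner (Set.mem_univ _) (Set.mem_univ _) (hdiff (x t))
    _ = (‖x 1 - u‖ ^ 2 - ‖x (T + 1) - u‖ ^ 2) / (2 * (α / Real.sqrt T))
          + T * (α / Real.sqrt T) / 2 :=
        sum_inner_eq_of_unit_steps (by positivity) hT hunit hrec u
    _ = _ := by
        rw [hx1, norm_sub_rev x₁ u]
        field_simp
        rw [Real.sq_sqrt (Nat.cast_nonneg T)]
        ring
end

section
/- Let H be a real inner product space, ν ∈ (0,1], L > 0, α > 0, T a positive integer. Let f : H → ℝ be convex, differentiable, (L,ν)-Hölder smooth, with global minimizer x⋆. Define iterates by x_{t+1} = x₁ − (α/√t)·∑_{i=1}^{t} g_i/‖g_i‖ with g_t = ∇f(x_t), assuming g_t ≠ 0 for t = 1, …, T, and the weighted average x̄_T = (∑_{t=1}^T 1/‖g_t‖)^{-1}·∑_{t=1}^T x_t/‖g_t‖. Then f(x̄_T) − f(x⋆) ≤ L·(1 + 1/ν)^ν·( (1/√T)·(‖x₁ − x⋆‖²/(2α) + α) )^{1+ν}. -/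
/-!
Normalizing the gradients turns dual averaging into online linear optimization against the unit
vectors `u_t = g_t / ‖g_t‖`, and for the stepsizes `α / √t` its regret against `x⋆` is at most
`R = √T (‖x₁ - x⋆‖² / (2α) + α)`. By convexity each regret term dominates
`(f(x_t) - f(x⋆)) / ‖g_t‖`, so by Jensen the gap at the `1/‖g_t‖`-weighted average is at most
`R / ∑ 1/‖g_t‖`. Hölder smoothness forces `‖g‖^((1+ν)/ν) ≲ L^(1/ν) (f(x) - f(x⋆))`, so the
regret also bounds `∑ ‖g_t‖^(1/ν)`, and Hölder's inequality
`T^(1+ν) ≤ (∑ ‖g_t‖^(1/ν))^ν ∑ 1/‖g_t‖` turns this into the lower bound on `∑ 1/‖g_t‖`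
that yields the rate.
-/

open scoped RealInnerProductSpace
open Finset

lemma rpow_one_add_div_self {x ν : ℝ} (hx : 0 < x) (hν : ν ≠ 0) :
    x ^ ((1 + ν) / ν) = x ^ (1 / ν) * x := by
  rw [add_div, div_self hν, Real.rpow_add hx, Real.rpow_one, mul_comm]

lemma sub_le_of_hasDerivAt_le_add_mul_rpow {φ φ' : ℝ → ℝ} {a K ν : ℝ} (hν : 0 < ν)
    (hφ : ∀ τ ∈ Set.Icc (0 : ℝ) 1, HasDerivAt φ (φ' τ) τ)
    (hφ' : ∀ τ ∈ Set.Icc (0 : ℝ) 1, φ' τ ≤ a + K * τ ^ ν) :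
    φ 1 - φ 0 ≤ a + K / (1 + ν) := by
  set ψ : ℝ → ℝ := fun τ ↦ φ τ - a * τ - K / (1 + ν) * τ ^ (1 + ν)
  have hψ : ∀ τ ∈ Set.Icc (0 : ℝ) 1, HasDerivAt ψ (φ' τ - a - K * τ ^ ν) τ := by
    intro τ hτ
    have hpow := Real.hasDerivAt_rpow_const (x := τ) (p := 1 + ν) (Or.inr (by linarith))
    have h := ((hφ τ hτ).sub ((hasDerivAt_id τ).const_mul a)).sub (hpow.const_mul (K / (1 + ν)))
    refine h.congr_deriv ?_
    rw [add_sub_cancel_left]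
    field_simp
  obtain ⟨c, hc, hslope⟩ := exists_hasDerivAt_eq_slope ψ _ zero_lt_one
    (fun τ hτ ↦ (hψ τ hτ).continuousAt.continuousWithinAt)
    (fun τ hτ ↦ hψ τ (Set.Ioo_subset_Icc_self hτ))
  have hc' := hφ' c (Set.Ioo_subset_Icc_self hc)
  simp only [ψ, Real.one_rpow, Real.zero_rpow (by linarith : (1 + ν) ≠ 0)] at hslope
  linarith

section Smoothness

variable {H : Type*} [NormedAddCommGroup H] [InnerProductSpace ℝ H] {f : H → ℝ} {f' : H → H}

lemma hasDerivAt_comp_lineMap (hdiff : ∀ x, HasFDerivAt f (innerSL ℝ (f' x)) x)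
    (x y : H) (τ : ℝ) :
    HasDerivAt (f ∘ AffineMap.lineMap x y) ⟪f' (AffineMap.lineMap x y τ), y - x⟫ τ :=
  (hdiff _).comp_hasDerivAt τ AffineMap.hasDerivAt_lineMap

lemma ConvexOn.sub_le_inner (hconv : ConvexOn ℝ Set.univ f)
    (hdiff : ∀ x, HasFDerivAt f (innerSL ℝ (f' x)) x) (x y : H) :
    f x - f y ≤ ⟪f' x, x - y⟫ := by
  have hline : ConvexOn ℝ Set.univ (f ∘ AffineMap.lineMap (k := ℝ) x y) := by
    simpa using hconv.comp_affineMap (AffineMap.lineMap x y)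
  have hslope := hline.le_slope_of_hasDerivAt (Set.mem_univ 0) (Set.mem_univ 1) zero_lt_one
    (by simpa using hasDerivAt_comp_lineMap hdiff x y 0)
  have hneg : ⟪f' x, y - x⟫ = -⟪f' x, x - y⟫ := by rw [← inner_neg_right, neg_sub]
  simp only [slope_def_field, Function.comp_apply, AffineMap.lineMap_apply_one,
    AffineMap.lineMap_apply_zero, sub_zero, div_one] at hslope
  linarith

lemma le_add_inner_add_mul_rpow_of_holder {L ν : ℝ} (hν : 0 < ν)
    (hdiff : ∀ x, HasFDerivAt f (innerSL ℝ (f' x)) x)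
    (hholder : ∀ x y, ‖f' x - f' y‖ ≤ L * ‖x - y‖ ^ ν) (x y : H) :
    f y ≤ f x + ⟪f' x, y - x⟫ + L / (1 + ν) * ‖y - x‖ ^ (1 + ν) := by
  have key := sub_le_of_hasDerivAt_le_add_mul_rpow (a := ⟪f' x, y - x⟫)
    (K := L * ‖y - x‖ ^ (1 + ν)) hν (fun τ _ ↦ hasDerivAt_comp_lineMap hdiff x y τ) ?_
  · simp only [Function.comp_apply, AffineMap.lineMap_apply_one,
      AffineMap.lineMap_apply_zero] at key
    linarith [show L * ‖y - x‖ ^ (1 + ν) / (1 + ν) = L / (1 + ν) * ‖y - x‖ ^ (1 + ν) by ring]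
  intro τ hτ
  have hdist : ‖AffineMap.lineMap x y τ - x‖ = τ * ‖y - x‖ := by
    rw [AffineMap.lineMap_apply_module', add_sub_cancel_right, norm_smul,
      Real.norm_of_nonneg hτ.1]
  calc ⟪f' (AffineMap.lineMap x y τ), y - x⟫
      = ⟪f' x, y - x⟫ + ⟪f' (AffineMap.lineMap x y τ) - f' x, y - x⟫ := by
        rw [inner_sub_left]; ring
    _ ≤ ⟪f' x, y - x⟫ + L * (τ * ‖y - x‖) ^ ν * ‖y - x‖ := by
        gcongr
        refine (real_inner_le_norm _ _).trans ?_
        gcongr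
        exact hdist ▸ hholder _ x
    _ = ⟪f' x, y - x⟫ + L * ‖y - x‖ ^ (1 + ν) * τ ^ ν := by
        rw [Real.mul_rpow hτ.1 (norm_nonneg _), Real.rpow_one_add' (norm_nonneg _) (by linarith)]
        ring

lemma norm_rpow_le_of_descent {L ν : ℝ} (hν : 0 < ν) (hL : 0 < L)
    (hdescent : ∀ x y, f y ≤ f x + ⟪f' x, y - x⟫ + L / (1 + ν) * ‖y - x‖ ^ (1 + ν))
    {xstar : H} (hmin : ∀ x, f xstar ≤ f x) (x : H) :
    ‖f' x‖ ^ ((1 + ν) / ν) ≤ (L * (1 + 1 / ν) ^ ν) ^ (1 / ν) * (f x - f xstar) := by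
  have hgap : 0 ≤ f x - f xstar := sub_nonneg.2 (hmin x)
  rcases eq_or_ne (f' x) 0 with hzero | hne
  · rw [hzero, norm_zero, Real.zero_rpow (by positivity)]
    positivity
  have hA : 0 < ‖f' x‖ := norm_pos_iff.2 hne
  set r := (‖f' x‖ / L) ^ (1 / ν) with hr_def
  have hr : 0 < r := by positivity
  have hLr : L * r ^ ν = ‖f' x‖ := by
    rw [hr_def, one_div, Real.rpow_inv_rpow (by positivity) hν.ne']
    field_simp
  -- step from `x` a distance `r` against the gradient; `r` maximizes the resulting decrease
  have hstep : r * ‖f' x‖ * ν / (1 + ν) ≤ f x - f xstar := by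
    have hd := hdescent x (x - (r / ‖f' x‖) • f' x)
    have hinner : ⟪f' x, x - (r / ‖f' x‖) • f' x - x⟫ = -(r * ‖f' x‖) := by
      rw [sub_sub_cancel_left, inner_neg_right, real_inner_smul_right,
        real_inner_self_eq_norm_sq]
      field_simp
    have hnorm : ‖x - (r / ‖f' x‖) • f' x - x‖ = r := by
      rw [sub_sub_cancel_left, norm_neg, norm_smul, Real.norm_of_nonneg (by positivity)]
      field_simp
    have hpow : L / (1 + ν) * r ^ (1 + ν) = r * ‖f' x‖ / (1 + ν) := by
      rw [Real.rpow_one_add' hr.le (by positivity), ← hLr]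
      ring
    rw [hinner, hnorm, hpow] at hd
    have hsplit : r * ‖f' x‖ * ν / (1 + ν) = r * ‖f' x‖ - r * ‖f' x‖ / (1 + ν) := by
      field_simp
      ring
    linarith [hmin (x - (r / ‖f' x‖) • f' x)]
  have hA_pow : ‖f' x‖ ^ ((1 + ν) / ν) = L ^ (1 / ν) * (r * ‖f' x‖) := by
    rw [hr_def, Real.div_rpow hA.le hL.le, rpow_one_add_div_self hA hν.ne']
    field_simp
  have hK : (L * (1 + 1 / ν) ^ ν) ^ (1 / ν) = L ^ (1 / ν) * (1 + 1 / ν) := by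
    rw [Real.mul_rpow hL.le (by positivity), ← Real.rpow_mul (by positivity),
      mul_one_div_cancel hν.ne', Real.rpow_one]
  rw [hA_pow, hK, mul_assoc]
  refine mul_le_mul_of_nonneg_left ?_ (by positivity)
  calc r * ‖f' x‖ = (1 + 1 / ν) * (r * ‖f' x‖ * ν / (1 + ν)) := by
        field_simp
        ring
    _ ≤ (1 + 1 / ν) * (f x - f xstar) := by gcongr

end Smoothness

lemma ConvexOn.map_centerMass_sub_le {E ι : Type*} [AddCommGroup E] [Module ℝ E] {f : E → ℝ}
    (hf : ConvexOn ℝ Set.univ f) {t : Finset ι} {w : ι → ℝ} (hw₀ : ∀ i ∈ t, 0 ≤ w i)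
    (hw : 0 < ∑ i ∈ t, w i) (p : ι → E) (c : ℝ) :
    f (t.centerMass w p) - c ≤ (∑ i ∈ t, w i)⁻¹ * ∑ i ∈ t, w i * (f (p i) - c) := by
  have hjensen := hf.map_centerMass_le hw₀ hw fun i _ ↦ Set.mem_univ (p i)
  simp only [centerMass, smul_eq_mul, Function.comp_apply] at hjensen ⊢
  simp only [mul_sub, sum_sub_distrib, ← sum_mul, ← mul_assoc, inv_mul_cancel₀ hw.ne', one_mul]
  linarith

lemma card_rpow_le_sum_rpow_mul_sum_inv {ι : Type*} {s : Finset ι} {a : ι → ℝ} {ν : ℝ}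
    (hν : 0 < ν) (ha : ∀ i ∈ s, 0 < a i) :
    (#s : ℝ) ^ (1 + ν) ≤ (∑ i ∈ s, a i ^ (1 / ν)) ^ ν * ∑ i ∈ s, (a i)⁻¹ := by
  have hconj : ((1 + ν) / ν).HolderConjugate (1 + ν) := by
    rw [Real.holderConjugate_iff]
    refine ⟨by rw [lt_div_iff₀ hν]; linarith, by field_simp; ring⟩
  -- Hölder's inequality for `1 = a ^ (1 / (1 + ν)) * a⁻¹ ^ (1 / (1 + ν))`
  have key := Real.inner_le_Lp_mul_Lq_of_nonneg s hconj
    (f := fun i ↦ a i ^ (1 / (1 + ν))) (g := fun i ↦ (a i)⁻¹ ^ (1 / (1 + ν)))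
    (fun i hi ↦ (Real.rpow_pos_of_pos (ha i hi) _).le)
    (fun i hi ↦ (Real.rpow_pos_of_pos (inv_pos.2 (ha i hi)) _).le)
  have hone : ∑ i ∈ s, a i ^ (1 / (1 + ν)) * (a i)⁻¹ ^ (1 / (1 + ν)) = #s := by
    rw [sum_congr rfl fun i hi ↦ by rw [← Real.mul_rpow (ha i hi).le (inv_pos.2 (ha i hi)).le,
      mul_inv_cancel₀ (ha i hi).ne', Real.one_rpow]]
    simp
  have hM : ∑ i ∈ s, (a i ^ (1 / (1 + ν))) ^ ((1 + ν) / ν) = ∑ i ∈ s, a i ^ (1 / ν) := by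
    refine sum_congr rfl fun i hi ↦ ?_
    rw [← Real.rpow_mul (ha i hi).le]
    congr 1
    field_simp
  have hS : ∑ i ∈ s, ((a i)⁻¹ ^ (1 / (1 + ν))) ^ (1 + ν) = ∑ i ∈ s, (a i)⁻¹ := by
    refine sum_congr rfl fun i hi ↦ ?_
    rw [← Real.rpow_mul (inv_pos.2 (ha i hi)).le, one_div_mul_cancel (by positivity),
      Real.rpow_one]
  rw [hone, hM, hS] at key
  have hM0 : 0 ≤ ∑ i ∈ s, a i ^ (1 / ν) :=
    sum_nonneg fun i hi ↦ (Real.rpow_pos_of_pos (ha i hi) _).le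
  have hS0 : 0 ≤ ∑ i ∈ s, (a i)⁻¹ := sum_nonneg fun i hi ↦ (inv_pos.2 (ha i hi)).le
  calc (#s : ℝ) ^ (1 + ν)
      ≤ ((∑ i ∈ s, a i ^ (1 / ν)) ^ (1 / ((1 + ν) / ν)) *
          (∑ i ∈ s, (a i)⁻¹) ^ (1 / (1 + ν))) ^ (1 + ν) := by gcongr
    _ = (∑ i ∈ s, a i ^ (1 / ν)) ^ ν * ∑ i ∈ s, (a i)⁻¹ := by
      rw [Real.mul_rpow (by positivity) (by positivity), ← Real.rpow_mul hM0,
        ← Real.rpow_mul hS0, one_div_mul_cancel (by positivity), Real.rpow_one]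
      congr 2
      field_simp

lemma inv_sum_inv_mul_sum_le {ι : Type*} {s : Finset ι} (hs : s.Nonempty) {a e : ι → ℝ}
    {ν K R : ℝ} (hν : 0 < ν) (hK : 0 < K) (ha : ∀ i ∈ s, 0 < a i)
    (hae : ∀ i ∈ s, a i ^ ((1 + ν) / ν) ≤ K ^ (1 / ν) * e i)
    (hR : ∑ i ∈ s, (a i)⁻¹ * e i ≤ R) :
    (∑ i ∈ s, (a i)⁻¹)⁻¹ * ∑ i ∈ s, (a i)⁻¹ * e i ≤ K * (R / #s) ^ (1 + ν) := by
  set S := ∑ i ∈ s, (a i)⁻¹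
  set M := ∑ i ∈ s, a i ^ (1 / ν)
  have hS : 0 < S := sum_pos (fun i hi ↦ inv_pos.2 (ha i hi)) hs
  have hM0 : 0 < M := sum_pos (fun i hi ↦ Real.rpow_pos_of_pos (ha i hi) _) hs
  have hMR : M ≤ K ^ (1 / ν) * R := by
    calc M ≤ ∑ i ∈ s, K ^ (1 / ν) * ((a i)⁻¹ * e i) := by
          refine sum_le_sum fun i hi ↦ ?_
          have h := hae i hi
          rw [rpow_one_add_div_self (ha i hi) hν.ne'] at h
          calc a i ^ (1 / ν) = (a i)⁻¹ * (a i ^ (1 / ν) * a i) := by field_simp [(ha i hi).ne']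
            _ ≤ (a i)⁻¹ * (K ^ (1 / ν) * e i) :=
              mul_le_mul_of_nonneg_left h (inv_pos.2 (ha i hi)).le
            _ = K ^ (1 / ν) * ((a i)⁻¹ * e i) := by ring
      _ ≤ K ^ (1 / ν) * R := by rw [← mul_sum]; gcongr
  have hR0 : 0 < R := pos_of_mul_pos_right (hM0.trans_le hMR) (by positivity)
  have hMν : M ^ ν ≤ K * R ^ ν := by
    calc M ^ ν ≤ (K ^ (1 / ν) * R) ^ ν := by gcongr
      _ = K * R ^ ν := by
        rw [Real.mul_rpow (by positivity) hR0.le, ← Real.rpow_mul hK.le,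
          one_div_mul_cancel hν.ne', Real.rpow_one]
  have hcard : (0 : ℝ) < #s := by exact_mod_cast hs.card_pos
  have hholder := card_rpow_le_sum_rpow_mul_sum_inv hν ha (s := s)
  calc S⁻¹ * ∑ i ∈ s, (a i)⁻¹ * e i ≤ R / S := by
        rw [div_eq_inv_mul]; gcongr
    _ ≤ R * M ^ ν / #s ^ (1 + ν) := by
        rw [div_le_div_iff₀ hS (by positivity)]
        nlinarith
    _ ≤ R * (K * R ^ ν) / #s ^ (1 + ν) := by gcongr
    _ = K * (R / #s) ^ (1 + ν) := by
        rw [Real.div_rpow hR0.le hcard.le, Real.rpow_one_add' hR0.le (by positivity)]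
        ring

lemma sum_Icc_one_eq_sum_range {M : Type*} [AddCommMonoid M] (F : ℕ → M) (n : ℕ) :
    ∑ t ∈ Icc 1 n, F t = ∑ k ∈ range n, F (k + 1) := by
  induction n with
  | zero => simp
  | succ n ih => rw [sum_Icc_succ_top (by omega), ih, sum_range_succ]

lemma Antitone.mul_le_sum_range_mul_sub {η b : ℕ → ℝ} (hη : Antitone η) (hb : ∀ k, 0 ≤ b k)
    (hb0 : b 0 = 0) (n : ℕ) :
    η n * b (n + 1) ≤ ∑ k ∈ range (n + 1), η k * (b (k + 1) - b k) := by
  induction n with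
  | zero => simp [hb0]
  | succ n ih =>
    rw [sum_range_succ]
    nlinarith [hη n.le_succ, hb (n + 1)]

lemma sum_range_inv_sqrt_max_one_le (n : ℕ) :
    ∑ k ∈ range (n + 1), (√((max k 1 : ℕ) : ℝ))⁻¹ ≤ 2 * √(n + 1 : ℝ) - (√(n + 1 : ℝ))⁻¹ := by
  induction n with
  | zero => norm_num
  | succ n ih =>
    rw [sum_range_succ, max_eq_left (by omega)]
    simp only [Nat.cast_add_one] at ih ⊢
    have ha : 0 < √(n + 1 : ℝ) := by positivity
    have hab : √(n + 1 : ℝ) ≤ √(n + 1 + 1 : ℝ) := Real.sqrt_le_sqrt (by linarith)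
    have hsq : √(n + 1 + 1 : ℝ) ^ 2 = √(n + 1 : ℝ) ^ 2 + 1 := by
      rw [Real.sq_sqrt (by positivity), Real.sq_sqrt (by positivity)]
    -- `2 b (b - a) ≥ b² - a² = 1`
    have hstep : (√(n + 1 + 1 : ℝ))⁻¹ ≤ 2 * (√(n + 1 + 1 : ℝ) - √(n + 1 : ℝ)) := by
      rw [inv_le_iff_one_le_mul₀ (by positivity)]
      nlinarith [sq_nonneg (√(n + 1 + 1 : ℝ) - √(n + 1 : ℝ))]
    linarith

section DualAveraging

variable {H : Type*} [NormedAddCommGroup H] [InnerProductSpace ℝ H]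

lemma dualAveraging_regret_le {η : ℕ → ℝ} (hη : Antitone η) {n : ℕ} (hηn : 0 < η n)
    {u y : ℕ → H} {x₀ : H} (hy : ∀ k ≤ n, y k = x₀ - η k • ∑ i ∈ range k, u i) (z : H) :
    ∑ k ∈ range (n + 1), ⟪u k, y k - z⟫ ≤
      ‖x₀ - z‖ ^ 2 / (2 * η n) + ∑ k ∈ range (n + 1), η k / 2 * ‖u k‖ ^ 2 := by
  set s : ℕ → H := fun k ↦ ∑ i ∈ range k, u i
  have hterm : ∀ k ∈ range (n + 1), ⟪u k, y k - z⟫ = ⟪u k, x₀ - z⟫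
      - η k * (‖s (k + 1)‖ ^ 2 - ‖s k‖ ^ 2) / 2 + η k / 2 * ‖u k‖ ^ 2 := by
    intro k hk
    have hs : s (k + 1) = s k + u k := sum_range_succ u k
    rw [hy k (Nat.lt_succ_iff.1 (mem_range.1 hk)), hs, norm_add_sq_real,
      show x₀ - η k • s k - z = (x₀ - z) - η k • s k by abel, inner_sub_right,
      real_inner_smul_right, real_inner_comm (s k)]
    ring
  have habel := hη.mul_le_sum_range_mul_sub (b := fun k ↦ ‖s k‖ ^ 2) (fun _ ↦ sq_nonneg _)
    (by simp [s]) n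
  have hsquare : ⟪s (n + 1), x₀ - z⟫ - η n / 2 * ‖s (n + 1)‖ ^ 2 ≤ ‖x₀ - z‖ ^ 2 / (2 * η n) := by
    rw [le_div_iff₀ (by positivity)]
    nlinarith [real_inner_le_norm (s (n + 1)) (x₀ - z), sq_nonneg (η n * ‖s (n + 1)‖ - ‖x₀ - z‖)]
  rw [sum_congr rfl hterm, sum_add_distrib, sum_sub_distrib, ← sum_inner, ← sum_div]
  linarith

lemma normalized_dualAveraging_regret_le {α : ℝ} (hα : 0 < α) {T : ℕ} (hT : 0 < T)
    {u x : ℕ → H} {x₁ : H} (hu : ∀ t ∈ Icc 1 T, ‖u t‖ ≤ 1) (hx1 : x 1 = x₁)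
    (hrec : ∀ t ∈ Icc 1 T, x (t + 1) = x₁ - (α / √t) • ∑ i ∈ Icc 1 t, u i) (z : H) :
    ∑ t ∈ Icc 1 T, ⟪u t, x t - z⟫ ≤ √T * (‖x₁ - z‖ ^ 2 / (2 * α) + α) := by
  obtain ⟨n, rfl⟩ : ∃ n, T = n + 1 := ⟨T - 1, by omega⟩
  -- the stepsize `α / √k` of the `(k+1)`-st iterate, with `k = 0` (an empty sum) capped at `α`
  set η : ℕ → ℝ := fun k ↦ α / √((max k 1 : ℕ) : ℝ)
  have hη : Antitone η := fun j k hjk ↦ by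
    simp only [η]
    gcongr
  have hy : ∀ k ≤ n, x (k + 1) = x₁ - η k • ∑ i ∈ range k, u (i + 1) := by
    rintro (_ | k) hk
    · simp [hx1]
    · rw [hrec (k + 1) (mem_Icc.2 ⟨by omega, by omega⟩), sum_Icc_one_eq_sum_range]
      simp only [η, max_eq_left (by omega : 1 ≤ k + 1)]
  have hηn : ‖x₁ - z‖ ^ 2 / (2 * η n) ≤ √(n + 1 : ℝ) * (‖x₁ - z‖ ^ 2 / (2 * α)) := by
    have hmax : ((max n 1 : ℕ) : ℝ) ≤ n + 1 := by exact_mod_cast (by omega : max n 1 ≤ n + 1)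
    calc ‖x₁ - z‖ ^ 2 / (2 * η n) = √((max n 1 : ℕ) : ℝ) * (‖x₁ - z‖ ^ 2 / (2 * α)) := by
          simp only [η]
          field_simp
      _ ≤ √(n + 1 : ℝ) * (‖x₁ - z‖ ^ 2 / (2 * α)) := by gcongr
  have hsteps : ∑ k ∈ range (n + 1), η k / 2 * ‖u (k + 1)‖ ^ 2 ≤ α * √(n + 1 : ℝ) := by
    calc ∑ k ∈ range (n + 1), η k / 2 * ‖u (k + 1)‖ ^ 2
        ≤ ∑ k ∈ range (n + 1), η k / 2 := by
          refine sum_le_sum fun k hk ↦ mul_le_of_le_one_right (by positivity) ?_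
          have hk1 := hu (k + 1) (mem_Icc.2 ⟨by omega, by simpa using hk⟩)
          nlinarith [norm_nonneg (u (k + 1))]
      _ = α / 2 * ∑ k ∈ range (n + 1), (√((max k 1 : ℕ) : ℝ))⁻¹ := by
          rw [mul_sum]
          refine sum_congr rfl fun k _ ↦ ?_
          simp only [η]
          ring
      _ ≤ α * √(n + 1 : ℝ) := by
          have hsum := sum_range_inv_sqrt_max_one_le n
          have hinv : 0 ≤ (√(n + 1 : ℝ))⁻¹ := by positivity
          nlinarith
  rw [sum_Icc_one_eq_sum_range]
  refine (dualAveraging_regret_le hη (by positivity) hy z).trans ?_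
  push_cast
  linarith

end DualAveraging

theorem dual_averaging_normalized_holder_rate_general
    {H : Type*} [NormedAddCommGroup H] [InnerProductSpace ℝ H]
    (ν L α : ℝ) (hν0 : 0 < ν) (hL : 0 < L) (hα : 0 < α)
    (T : ℕ) (hT : 0 < T)
    (f : H → ℝ) (f' : H → H)
    (hconv : ConvexOn ℝ Set.univ f)
    (hdiff : ∀ x, HasFDerivAt f (innerSL ℝ (f' x)) x)
    (hholder : ∀ x y, ‖f' x - f' y‖ ≤ L * ‖x - y‖ ^ ν)
    (xstar : H) (hmin : ∀ x, f xstar ≤ f x)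
    (x₁ : H) (x : ℕ → H) (hx1 : x 1 = x₁)
    (hgne : ∀ t ∈ Finset.Icc 1 T, f' (x t) ≠ 0)
    (hrec : ∀ t ∈ Finset.Icc 1 T,
      x (t + 1) = x₁ - (α / Real.sqrt t) •
        ∑ i ∈ Finset.Icc 1 t, ‖f' (x i)‖⁻¹ • f' (x i)) :
    f ((∑ t ∈ Finset.Icc 1 T, ‖f' (x t)‖⁻¹)⁻¹ •
        ∑ t ∈ Finset.Icc 1 T, ‖f' (x t)‖⁻¹ • x t) - f xstar
      ≤ L * (1 + 1 / ν) ^ ν *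
        (1 / Real.sqrt T * (‖x₁ - xstar‖ ^ 2 / (2 * α) + α)) ^ (1 + ν) := by
  have hnorm : ∀ t ∈ Icc 1 T, 0 < ‖f' (x t)‖ := fun t ht ↦ norm_pos_iff.2 (hgne t ht)
  have hregret := normalized_dualAveraging_regret_le hα hT
    (u := fun t ↦ ‖f' (x t)‖⁻¹ • f' (x t)) (fun t ht ↦ by
      rw [norm_smul, norm_inv, norm_norm, inv_mul_cancel₀ (hnorm t ht).ne']) hx1 hrec xstar
  have hgap : ∑ t ∈ Icc 1 T, ‖f' (x t)‖⁻¹ * (f (x t) - f xstar) ≤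
      √T * (‖x₁ - xstar‖ ^ 2 / (2 * α) + α) := by
    refine le_trans (sum_le_sum fun t _ ↦ ?_) hregret
    rw [real_inner_smul_left]
    exact mul_le_mul_of_nonneg_left (hconv.sub_le_inner hdiff _ _) (by positivity)
  have hjensen := hconv.map_centerMass_sub_le (fun t ht ↦ (inv_pos.2 (hnorm t ht)).le)
    (sum_pos (fun t ht ↦ inv_pos.2 (hnorm t ht)) (nonempty_Icc.2 hT)) x (f xstar)
  have hdescent := le_add_inner_add_mul_rpow_of_holder hν0 hdiff hholder
  refine hjensen.trans ((inv_sum_inv_mul_sum_le (nonempty_Icc.2 hT) hν0 (by positivity) hnorm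
    (fun t _ ↦ norm_rpow_le_of_descent hν0 hL hdescent hmin (x t)) hgap).trans_eq ?_)
  rw [Nat.card_Icc, Nat.add_sub_cancel]
  congr 2
  field_simp
  exact Real.sq_sqrt (Nat.cast_nonneg T)

/-- FTRL/Dual Averaging with normalized gradients and stepsize `α/√t` adapts to Hölder
smoothness: `f(x̄_T) − f(x⋆) ≤ L(1 + 1/ν)^ν ((1/√T)(‖x₁ − x⋆‖²/(2α) + α))^{1+ν}`. -/
theorem dual_averaging_normalized_holder_rate
    {H : Type*} [NormedAddCommGroup H] [InnerProductSpace ℝ H]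
    (ν L α : ℝ) (hν0 : 0 < ν) (hν1 : ν ≤ 1) (hL : 0 < L) (hα : 0 < α)
    (T : ℕ) (hT : 0 < T)
    (f : H → ℝ) (f' : H → H)
    (hconv : ConvexOn ℝ Set.univ f)
    (hdiff : ∀ x, HasFDerivAt f (innerSL ℝ (f' x)) x)
    (hholder : ∀ x y, ‖f' x - f' y‖ ≤ L * ‖x - y‖ ^ ν)
    (xstar : H) (hmin : ∀ x, f xstar ≤ f x)
    (x₁ : H) (x : ℕ → H) (hx1 : x 1 = x₁)
    (hgne : ∀ t ∈ Finset.Icc 1 T, f' (x t) ≠ 0)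
    (hrec : ∀ t ∈ Finset.Icc 1 T,
      x (t + 1) = x₁ - (α / Real.sqrt t) •
        ∑ i ∈ Finset.Icc 1 t, ‖f' (x i)‖⁻¹ • f' (x i)) :
    f ((∑ t ∈ Finset.Icc 1 T, ‖f' (x t)‖⁻¹)⁻¹ •
        ∑ t ∈ Finset.Icc 1 T, ‖f' (x t)‖⁻¹ • x t) - f xstar
      ≤ L * (1 + 1 / ν) ^ ν *
        (1 / Real.sqrt T * (‖x₁ - xstar‖ ^ 2 / (2 * α) + α)) ^ (1 + ν) :=
  dual_averaging_normalized_holder_rate_general ν L α hν0 hL hα T hT f f' hconv hdiff hholder xstar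
    hmin x₁ x hx1 hgne hrec
end
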